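/- The hypercube Q_5 does not admit a decomposition into copies of the sunlet graph L_16. -/

import Mathlib

/-- The `n`-dimensional hypercube graph `Q_n`: vertices are binary strings of
length `n`, adjacent iff they differ in exactly one coordinate. -/
def hypercube (n : ℕ) : SimpleGraph (Fin n → Bool) where
  Adj x y := ∃! i, x i ≠ y i
  symm := by
    constructor
    rintro x y ⟨i, hi, hu⟩
    exact ⟨i, hi.symm, fun j h => hu j h.symm⟩
  loopless := by
    constructor
    rintro x ⟨i, hi, -⟩
    exact hi rfl

/-- The cycle `C_k` on vertex set `ZMod k`. -/
def cycleGraph (k : ℕ) : SimpleGraph (ZMod k) :=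
  SimpleGraph.fromRel (fun i j => j = i + 1)

/-- The sunlet graph `L_{2k}`: a cycle `C_k` together with a pendant vertex
attached to each cycle vertex. -/
def sunlet (k : ℕ) : SimpleGraph (ZMod k ⊕ ZMod k) :=
  SimpleGraph.fromRel (fun a b =>
    (∃ i : ZMod k, a = Sum.inl i ∧ b = Sum.inl (i + 1)) ∨
    (∃ i : ZMod k, a = Sum.inl i ∧ b = Sum.inr i))

/-- `G` admits a decomposition into copies of `H`: a family of embedded copies of
`H` in `G` such that every edge of `G` lies in exactly one copy. -/
def HasDecomp {V : Type*} {W : Type*} (G : SimpleGraph V) (H : SimpleGraph W) : Prop :=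
  ∃ (ι : Type) (f : ι → (H ↪g G)),
    ∀ e ∈ G.edgeSet, ∃! i : ι, e ∈ Sym2.map (f i) '' H.edgeSet

/-! In a decomposition of the `5`-regular cube `Q_5`, a vertex can be a degree-`3` vertex of at
most one copy of `L_16`: two copies would give it `6` distinct incident edges. Hence the cycle
vertices of all copies are pairwise distinct, so there are at most `32 / 8 = 4` copies, whereas
covering the `80` edges needs at least `80 / 16 = 5`. -/

open Finset SimpleGraph

variable {V W ι : Type*} {G : SimpleGraph V} {H : SimpleGraph W}

namespace SimpleGraph

theorem IsRegularOfDegree.two_mul_card_edgeFinset [Fintype V] [DecidableRel G.Adj] {r : ℕ}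
    (hG : G.IsRegularOfDegree r) : 2 * #G.edgeFinset = Fintype.card V * r := by
  rw [← sum_degrees_eq_twice_card_edges, Finset.sum_congr rfl fun v _ => hG v, sum_const,
    card_univ, smul_eq_mul]

end SimpleGraph

def IsDecomp (G : SimpleGraph V) (H : SimpleGraph W) (f : ι → (H ↪g G)) : Prop :=
  ∀ e ∈ G.edgeSet, ∃! i, e ∈ Sym2.map (f i) '' H.edgeSet

namespace IsDecomp

variable {f : ι → (H ↪g G)}

theorem finite [Finite G.edgeSet] (hf : IsDecomp G H f) (hH : H.edgeSet.Nonempty) : Finite ι := by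
  obtain ⟨e, he⟩ := hH
  refine Finite.of_injective (fun i => (f i).mapEdgeSet ⟨e, he⟩) fun i j hij => ?_
  have hmem : ∀ k, Sym2.map (f k) e ∈ Sym2.map (f k) '' H.edgeSet := fun k => ⟨e, he, rfl⟩
  have hij : Sym2.map (f i) e = Sym2.map (f j) e := congrArg Subtype.val hij
  exact (hf _ ((Embedding.map_mem_edgeSet_iff (f i)).2 he)).unique (hmem i) (hij ▸ hmem j)

theorem card_edgeSet_le [Finite ι] [Finite H.edgeSet] (hf : IsDecomp G H f) :
    Nat.card G.edgeSet ≤ Nat.card ι * Nat.card H.edgeSet := by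
  rw [← Nat.card_prod]
  refine Nat.card_le_card_of_surjective (fun p : ι × H.edgeSet => (f p.1).mapEdgeSet p.2) ?_
  rintro ⟨e, he⟩
  obtain ⟨i, ⟨e', he', rfl⟩, -⟩ := hf e he
  exact ⟨(i, ⟨e', he'⟩), rfl⟩

/-- The neighbourhoods of `a` in copy `i` and of `b` in copy `j` are disjoint sets of neighbours
of the common image vertex, since an edge lies in only one copy. -/
theorem eq_of_apply_eq [G.LocallyFinite] [H.LocallyFinite] (hf : IsDecomp G H f) {i j : ι}
    {a b : W} (hab : f i a = f j b) (hdeg : G.degree (f i a) < H.degree a + H.degree b) :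
    i = j := by
  by_contra hij
  set v := f i a
  have hcopy : ∀ k c, f k c = v → ∀ w ∈ (H.neighborFinset c).map (f k).toEmbedding,
      G.Adj v w ∧ s(v, w) ∈ Sym2.map (f k) '' H.edgeSet := by
    intro k c hkc w hw
    obtain ⟨u, hu, rfl⟩ := mem_map.1 hw
    rw [mem_neighborFinset] at hu
    exact ⟨hkc ▸ (f k).map_adj_iff.2 hu, s(c, u), hu, by rw [Sym2.map_mk, hkc]; rfl⟩
  have hdisj : Disjoint ((H.neighborFinset a).map (f i).toEmbedding)
      ((H.neighborFinset b).map (f j).toEmbedding) := by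
    refine disjoint_left.2 fun w hwi hwj => hij ?_
    obtain ⟨hvw, hi⟩ := hcopy i a rfl w hwi
    exact (hf _ hvw).unique hi (hcopy j b hab.symm w hwj).2
  have hsub : ((H.neighborFinset a).map (f i).toEmbedding).disjUnion _ hdisj ⊆
      G.neighborFinset v := by
    intro w hw
    rw [mem_neighborFinset]
    rcases mem_disjUnion.1 hw with hw | hw
    exacts [(hcopy i a rfl w hw).1, (hcopy j b hab.symm w hw).1]
  have := card_le_card hsub
  rw [card_disjUnion, card_map, card_map, card_neighborFinset_eq_degree,
    card_neighborFinset_eq_degree, card_neighborFinset_eq_degree] at this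
  omega

theorem card_mul_card_le [Finite V] [G.LocallyFinite] [H.LocallyFinite] {r : ℕ}
    (hf : IsDecomp G H f) (hG : G.IsRegularOfDegree r) (S : Set W)
    (hS : ∀ a ∈ S, r < 2 * H.degree a) : Nat.card ι * Nat.card S ≤ Nat.card V := by
  rw [← Nat.card_prod]
  refine Nat.card_le_card_of_injective (fun p : ι × S => f p.1 p.2) ?_
  rintro ⟨i, a, ha⟩ ⟨j, b, hb⟩ (hab : f i a = f j b)
  have hij : i = j := hf.eq_of_apply_eq hab <| by
    rw [hG]; have := hS a ha; have := hS b hb; omega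
  subst hij
  simpa using (f i).injective hab

end IsDecomp

instance (n : ℕ) : DecidableRel (hypercube n).Adj := fun x y =>
  decidable_of_iff (∃ i, x i ≠ y i ∧ ∀ j, x j ≠ y j → j = i) Iff.rfl

instance (k : ℕ) [NeZero k] : DecidableRel (sunlet k).Adj := fun a b => by
  unfold sunlet
  rw [SimpleGraph.fromRel_adj]
  infer_instance

theorem hypercube_five_isRegularOfDegree : (hypercube 5).IsRegularOfDegree 5 :=
  show ∀ v, _ by decide

theorem card_edgeFinset_hypercube_five : #(hypercube 5).edgeFinset = 80 := by
  have := hypercube_five_isRegularOfDegree.two_mul_card_edgeFinset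
  rw [Fintype.card_fun, Fintype.card_bool, Fintype.card_fin] at this
  omega

theorem card_edgeFinset_sunlet_eight : #(sunlet 8).edgeFinset = 16 := by
  decide

theorem sunlet_eight_degree_inl (a : ZMod 8) : (sunlet 8).degree (Sum.inl a) = 3 := by
  revert a
  decide

theorem no_L16_decomp_Q5 : ¬ HasDecomp (hypercube 5) (sunlet 8) := by
  rintro ⟨ι, f, hf : IsDecomp _ _ f⟩
  have : Finite ι := hf.finite ⟨s(Sum.inl 0, Sum.inr 0), by decide⟩
  have hverts := hf.card_mul_card_le hypercube_five_isRegularOfDegree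
    (Set.range Sum.inl) (Set.forall_mem_range.2 fun a => by rw [sunlet_eight_degree_inl]; norm_num)
  have hedges := hf.card_edgeSet_le
  rw [Nat.card_range_of_injective Sum.inl_injective] at hverts
  simp only [Nat.card_eq_fintype_card, ← edgeFinset_card, card_edgeFinset_hypercube_five,
    card_edgeFinset_sunlet_eight, ZMod.card, Fintype.card_fun, Fintype.card_bool,
    Fintype.card_fin] at hverts hedges
  omega
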